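/- arXiv:1503.05314 — 8 statements merged into one kernel-verified Lean document; each statement's English description precedes it below -/
import Mathlib

section
/- Let m : ℝ → ℝ be differentiable on (0, ∞) and satisfy m(η) > 0 and deriv m(η) ≤ −m(η)² for every η > 0. Then the function f(η) := 1/m(η) − η is non-decreasing on (0, ∞). If in addition m(η) < 1/η for every η > 0 (so that f(η) > 0), then ψ(η) := (1/m(η) − η)⁻¹ is non-increasing on (0, ∞). (Second half of Proposition 1.) -/
/-! Since `(1 / m)' = -m' / m² ≥ 1`, the function `1 / m η - η` has nonnegative derivative, hence is
non-decreasing. Under `m η < 1 / η` it is positive, and inversion reverses order on positive reals. -/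

theorem hasDerivAt_one_div_sub_id {m : ℝ → ℝ} {x : ℝ} (hm : DifferentiableAt ℝ m x) (hx : m x ≠ 0) :
    HasDerivAt (fun η => 1 / m η - η) (-deriv m x / m x ^ 2 - 1) x := by
  simp_rw [one_div]
  exact (hm.hasDerivAt.inv hx).sub (hasDerivAt_id' x)

theorem monotoneOn_one_div_sub_id {m : ℝ → ℝ} {s : Set ℝ} (hs : Convex ℝ s) (hso : IsOpen s)
    (hdiff : ∀ x ∈ s, DifferentiableAt ℝ m x) (hne : ∀ x ∈ s, m x ≠ 0)
    (hder : ∀ x ∈ s, deriv m x ≤ -m x ^ 2) :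
    MonotoneOn (fun η => 1 / m η - η) s := by
  have hf x (hx : x ∈ s) := hasDerivAt_one_div_sub_id (hdiff x hx) (hne x hx)
  refine monotoneOn_of_hasDerivWithinAt_nonneg hs
    (fun x hx => (hf x hx).continuousAt.continuousWithinAt)
    (fun x hx => (hf x (interior_subset hx)).hasDerivWithinAt) fun x hx => ?_
  rw [hso.interior_eq] at hx
  have hsq : 0 < m x ^ 2 := by positivity [hne x hx]
  rw [sub_nonneg, le_div_iff₀ hsq]
  linarith [hder x hx]

/-- Second half of Proposition 1: if `m` (modelling the MMSE function) is differentiable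
on `(0,∞)`, positive there, and satisfies `deriv m η ≤ −(m η)²` (Property 2 of the MMSE
function together with Jensen's inequality), then `f(η) = 1/m(η) − η` is non-decreasing
on `(0,∞)`; if moreover `m(η) < 1/η` for all `η > 0`, then `ψ(η) = (1/m(η) − η)⁻¹`
is non-increasing on `(0,∞)`. -/
theorem tsr_psi_nonincreasing (m : ℝ → ℝ)
    (hdiff : ∀ η > (0 : ℝ), DifferentiableAt ℝ m η)
    (hpos : ∀ η > (0 : ℝ), 0 < m η)
    (hder : ∀ η > (0 : ℝ), deriv m η ≤ -(m η) ^ 2) :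
    (∀ η₁ η₂ : ℝ, 0 < η₁ → η₁ ≤ η₂ → 1 / m η₁ - η₁ ≤ 1 / m η₂ - η₂) ∧
    ((∀ η > (0 : ℝ), m η < 1 / η) →
      ∀ η₁ η₂ : ℝ, 0 < η₁ → η₁ ≤ η₂ → (1 / m η₂ - η₂)⁻¹ ≤ (1 / m η₁ - η₁)⁻¹) := by
  have hmono : MonotoneOn (fun η => 1 / m η - η) (Set.Ioi 0) :=
    monotoneOn_one_div_sub_id (convex_Ioi 0) isOpen_Ioi hdiff (fun η hη => (hpos η hη).ne') hder
  have hf : ∀ η₁ η₂ : ℝ, 0 < η₁ → η₁ ≤ η₂ → 1 / m η₁ - η₁ ≤ 1 / m η₂ - η₂ :=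
    fun η₁ η₂ h₁ h₁₂ => hmono h₁ (h₁.trans_le h₁₂) h₁₂
  refine ⟨hf, fun hlt η₁ η₂ h₁ h₁₂ => inv_anti₀ ?_ (hf η₁ η₂ h₁ h₁₂)⟩
  exact sub_pos.2 ((lt_one_div (hpos η₁ h₁) h₁).1 (hlt η₁ h₁))
end

section
/- The TSR state-evolution sequences are monotone: for every t ≥ 0, v^{t+1} ≤ v^t, and for every t ≥ 1, η^t ≤ η^{t+1}. (Equation (24).) -/
/-!
The round trip `ψ ∘ φ` is a composition of two maps that are antitone on `(0, ∞)`: `φ` because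
its denominator is increasing in `v`, and `ψ` because `1 / m(η) - η` is non-decreasing. Hence
`ψ ∘ φ` is monotone there, and a monotone recursion that starts with a step down keeps going down.
The first step is down because the MMSE bound `m(η) ≤ 1 / (1 + η)` forces `1 / m(η) - η ≥ 1`,
i.e. `v¹ ≤ 1 = v⁰`. Monotonicity of `η` then follows from that of `v` through the antitone `φ`.
-/

open Set

lemma one_le_one_div_sub_of_le_one_div_one_add {x e : ℝ} (hx : 0 < x) (he : 0 < 1 + e)
    (h : x ≤ 1 / (1 + e)) : 1 ≤ 1 / x - e := by
  have := (le_one_div hx he).1 h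
  linarith

lemma mapsTo_inv_one_div_sub_Ioc {m : ℝ → ℝ}
    (hm : ∀ η > (0 : ℝ), 0 < m η ∧ m η ≤ 1 / (1 + η)) :
    MapsTo (fun e => (1 / m e - e)⁻¹) (Ioi 0) (Ioc 0 1) := fun e (he : 0 < e) =>
  have hgap := one_le_one_div_sub_of_le_one_div_one_add (hm e he).1 (by linarith) (hm e he).2
  ⟨inv_pos.2 (by linarith), inv_le_one_of_one_le₀ hgap⟩

lemma antitoneOn_inv_one_div_sub {m : ℝ → ℝ}
    (hm : ∀ η > (0 : ℝ), 0 < m η ∧ m η ≤ 1 / (1 + η))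
    (hf : MonotoneOn (fun e => 1 / m e - e) (Ioi 0)) :
    AntitoneOn (fun e => (1 / m e - e)⁻¹) (Ioi 0) :=
  antitoneOn_inv_pos.comp_MonotoneOn hf fun _ he =>
    inv_pos.1 (mapsTo_inv_one_div_sub_Ioc hm he).1

lemma antitoneOn_inv_affine {a b : ℝ} (ha : 0 ≤ a) (hb : 0 < b) :
    AntitoneOn (fun x => (a * x + b)⁻¹) (Ioi 0) := fun x (hx : 0 < x) _ _ hxy =>
  inv_anti₀ (add_pos_of_nonneg_of_pos (mul_nonneg ha hx.le) hb) (by gcongr)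

lemma antitone_of_succ_eq_of_monotoneOn {α : Type*} [Preorder α] {s : Set α} {g : α → α}
    {x : ℕ → α} (hg : MonotoneOn g s) (hs : ∀ n, x n ∈ s) (hrec : ∀ n, x (n + 1) = g (x n))
    (h₀ : x 1 ≤ x 0) : Antitone x := by
  refine antitone_nat_of_succ_le fun n => ?_
  induction n with
  | zero => exact h₀
  | succ n ih =>
    calc x (n + 1 + 1) = g (x (n + 1)) := hrec _
      _ ≤ g (x n) := hg (hs _) (hs _) ih
      _ = x (n + 1) := (hrec n).symm

/-- Equation (24): the TSR state-evolution sequences are monotone: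
`v^{t+1} ≤ v^t` for all `t ≥ 0` and `η^t ≤ η^{t+1}` for all `t ≥ 1`. -/
theorem tsr_se_monotone (M N σ2 : ℝ) (hM : 0 < M) (hMN : M < N) (hσ2 : 0 < σ2)
    (m : ℝ → ℝ)
    (hm : ∀ η > (0 : ℝ), 0 < m η ∧ m η ≤ 1 / (1 + η))
    (hf : ∀ η₁ η₂ : ℝ, 0 < η₁ → η₁ ≤ η₂ → 1 / m η₁ - η₁ ≤ 1 / m η₂ - η₂)
    (v η : ℕ → ℝ) (hv0 : v 0 = 1)
    (hη : ∀ t : ℕ, η (t + 1) = (((N - M) / M) * v t + (N / M) * σ2)⁻¹)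
    (hv : ∀ t : ℕ, v (t + 1) = (1 / m (η (t + 1)) - η (t + 1))⁻¹) :
    (∀ t : ℕ, v (t + 1) ≤ v t) ∧ (∀ t : ℕ, 1 ≤ t → η t ≤ η (t + 1)) := by
  set φ : ℝ → ℝ := fun x => ((N - M) / M * x + N / M * σ2)⁻¹
  set ψ : ℝ → ℝ := fun e => (1 / m e - e)⁻¹
  have hc : 0 < (N - M) / M := div_pos (sub_pos.2 hMN) hM
  have hd : 0 < N / M * σ2 := by have : 0 < N := hM.trans hMN; positivity
  have hφ_anti : AntitoneOn φ (Ioi 0) := antitoneOn_inv_affine hc.le hd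
  have hφ_maps : MapsTo φ (Ioi 0) (Ioi 0) := fun _ hx =>
    inv_pos.2 (add_pos (mul_pos hc hx) hd)
  have hψ_maps : MapsTo ψ (Ioi 0) (Ioc 0 1) := mapsTo_inv_one_div_sub_Ioc hm
  have hψ_anti : AntitoneOn ψ (Ioi 0) :=
    antitoneOn_inv_one_div_sub hm fun a ha _ _ hab => hf _ _ ha hab
  have hv_pos : ∀ t, 0 < v t := fun t => by
    induction t with
    | zero => rw [hv0]; exact one_pos
    | succ t ih => rw [hv, hη]; exact (hψ_maps (hφ_maps ih)).1
  have hv_anti : Antitone v := by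
    refine antitone_of_succ_eq_of_monotoneOn (hψ_anti.comp hφ_anti hφ_maps) hv_pos
      (fun t => by rw [hv, hη]; rfl) ?_
    rw [hv, hη, hv0]
    exact (hψ_maps (hφ_maps (mem_Ioi.2 one_pos))).2
  refine ⟨fun t => hv_anti t.le_succ, fun t ht => ?_⟩
  obtain ⟨s, rfl⟩ := Nat.exists_eq_add_of_le' ht
  rw [hη, hη]
  exact hφ_anti (hv_pos _) (hv_pos _) (hv_anti s.le_succ)
end

section
/- The TSR state-evolution sequences are bounded: for every t ≥ 0 one has 0 ≤ v^t ≤ 1, and for every t ≥ 0 one has 0 < η^{t+1} ≤ M/(N·σ²). (Equation (28).) -/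
/-!
The denominator `((N - M)/M)·v + (N/M)·σ²` of `φ` is at least `(N/M)·σ² > 0` as soon as
`v ≥ 0`, which bounds `η = φ(v)` in `(0, M/(Nσ²)]`. The MMSE bound `m(η) ≤ 1/(1 + η)`
says `1/m(η) - η ≥ 1`, so `v = ψ(η)` lies in `[0, 1]`. Induction on `t` alternates the two.
-/

lemma inv_mul_add_mem_Ioc {a b x : ℝ} (ha : 0 ≤ a) (hb : 0 < b) (hx : 0 ≤ x) :
    0 < (a * x + b)⁻¹ ∧ (a * x + b)⁻¹ ≤ b⁻¹ := by
  have hle : b ≤ a * x + b := le_add_of_nonneg_left (mul_nonneg ha hx)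
  exact ⟨inv_pos.2 (hb.trans_le hle), inv_anti₀ hb hle⟩

lemma one_le_one_div_sub_of_le_one_div_one_add_s4 {μ η : ℝ} (hμ : 0 < μ) (hη : 0 < 1 + η)
    (h : μ ≤ 1 / (1 + η)) : 1 ≤ 1 / μ - η := by
  have : 1 + η ≤ 1 / μ := (le_one_div hμ hη).1 h
  linarith

lemma inv_mem_Icc_of_one_le {d : ℝ} (hd : 1 ≤ d) : 0 ≤ d⁻¹ ∧ d⁻¹ ≤ 1 :=
  ⟨inv_nonneg.2 (zero_le_one.trans hd), inv_le_one_of_one_le₀ hd⟩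

theorem tsr_se_bounded_general (M N σ2 : ℝ) (hM : 0 < M) (hMN : M < N) (hσ2 : 0 < σ2)
    (m : ℝ → ℝ)
    (hm : ∀ η > (0 : ℝ), 0 < m η ∧ m η ≤ 1 / (1 + η))
    (v η : ℕ → ℝ) (hv0 : v 0 = 1)
    (hη : ∀ t : ℕ, η (t + 1) = (((N - M) / M) * v t + (N / M) * σ2)⁻¹)
    (hv : ∀ t : ℕ, v (t + 1) = (1 / m (η (t + 1)) - η (t + 1))⁻¹) :
    (∀ t : ℕ, 0 ≤ v t ∧ v t ≤ 1) ∧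
    (∀ t : ℕ, 0 < η (t + 1) ∧ η (t + 1) ≤ M / (N * σ2)) := by
  have hN : 0 < N := hM.trans hMN
  have hη_bound : ∀ t, 0 ≤ v t → 0 < η (t + 1) ∧ η (t + 1) ≤ M / (N * σ2) := by
    intro t hvt
    have hφ := inv_mul_add_mem_Ioc (div_nonneg (sub_nonneg.2 hMN.le) hM.le)
      (mul_pos (div_pos hN hM) hσ2) hvt
    have hlimit : ((N / M) * σ2)⁻¹ = M / (N * σ2) := by field_simp
    rw [hη t, ← hlimit]
    exact hφ
  have hv_bound : ∀ t, 0 ≤ v t ∧ v t ≤ 1 := by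
    intro t
    induction t with
    | zero => simp [hv0]
    | succ t ih =>
      have hpos := (hη_bound t ih.1).1
      obtain ⟨hm_pos, hm_le⟩ := hm _ hpos
      rw [hv t]
      exact inv_mem_Icc_of_one_le
        (one_le_one_div_sub_of_le_one_div_one_add_s4 hm_pos (by linarith) hm_le)
  exact ⟨hv_bound, fun t => hη_bound t (hv_bound t).1⟩

/-- Equation (28): the TSR state-evolution sequences are bounded:
`0 ≤ v^t ≤ 1` for all `t ≥ 0` and `0 < η^{t+1} ≤ M/(N·σ²)` for all `t ≥ 0`. -/
theorem tsr_se_bounded (M N σ2 : ℝ) (hM : 0 < M) (hMN : M < N) (hσ2 : 0 < σ2)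
    (m : ℝ → ℝ)
    (hm : ∀ η > (0 : ℝ), 0 < m η ∧ m η ≤ 1 / (1 + η))
    (hf : ∀ η₁ η₂ : ℝ, 0 < η₁ → η₁ ≤ η₂ → 1 / m η₁ - η₁ ≤ 1 / m η₂ - η₂)
    (v η : ℕ → ℝ) (hv0 : v 0 = 1)
    (hη : ∀ t : ℕ, η (t + 1) = (((N - M) / M) * v t + (N / M) * σ2)⁻¹)
    (hv : ∀ t : ℕ, v (t + 1) = (1 / m (η (t + 1)) - η (t + 1))⁻¹) :
    (∀ t : ℕ, 0 ≤ v t ∧ v t ≤ 1) ∧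
    (∀ t : ℕ, 0 < η (t + 1) ∧ η (t + 1) ≤ M / (N * σ2)) :=
  tsr_se_bounded_general M N σ2 hM hMN hσ2 m hm v η hv0 hη hv
end

section
/- Any fixed point of the TSR state evolution satisfies a quadratic equation: if η > 0 and v ≥ 0 satisfy η = (((N−M)/M)·v + (N/M)·σ²)⁻¹ and v = (1/m(η) − η)⁻¹, where m(η) > 0 and 1/m(η) − η > 0, then σ²·m(η)·η² − (m(η) + σ²)·η + M/N = 0. (Underlying equation (34).) -/
/-!
Since `ψ(η) = m / (1 - η m)`, the fixed-point relation `η · φ(v)⁻¹ = 1` becomes, after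
multiplying by `M (1 - η m)`, a polynomial identity in `η` and `m`; dividing by `N` gives
the quadratic.
-/

theorem inv_one_div_sub_eq_div {K : Type*} [Field K] {m η : K} (hm : m ≠ 0) :
    (1 / m - η)⁻¹ = m / (1 - η * m) := by
  rw [show 1 / m - η = (1 - η * m) / m by field_simp, inv_div]

theorem tsr_quadratic_of_fixed_point {K : Type*} [Field K] {M N σ2 m η v : K}
    (hM : M ≠ 0) (hN : N ≠ 0) (hη : η ≠ 0) (hm : m ≠ 0) (hmη : 1 - η * m ≠ 0)
    (h1 : η = (((N - M) / M) * v + (N / M) * σ2)⁻¹) (h2 : v = (1 / m - η)⁻¹) :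
    σ2 * m * η ^ 2 - (m + σ2) * η + M / N = 0 := by
  have hφ : ((N - M) / M) * v + (N / M) * σ2 ≠ 0 := fun h ↦ hη (by rw [h1, h, inv_zero])
  have hfix : η * (((N - M) / M) * v + (N / M) * σ2) = 1 := (mul_eq_one_iff_eq_inv₀ hφ).mpr h1
  rw [h2, inv_one_div_sub_eq_div hm] at hfix
  field_simp [hmη] at hfix
  rw [← mul_right_inj' hN, mul_zero]
  field_simp
  linear_combination -hfix

theorem tsr_fixed_point_quadratic_general (M N σ2 : ℝ) (hM : 0 < M) (hMN : M < N)
    (m : ℝ → ℝ) (η v : ℝ) (hη : 0 < η)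
    (hmpos : 0 < m η) (hfpos : 0 < 1 / m η - η)
    (h1 : η = (((N - M) / M) * v + (N / M) * σ2)⁻¹)
    (h2 : v = (1 / m η - η)⁻¹) :
    σ2 * m η * η ^ 2 - (m η + σ2) * η + M / N = 0 := by
  have hmη : 0 < 1 - η * m η := by
    rw [show 1 - η * m η = m η * (1 / m η - η) by field_simp]
    exact mul_pos hmpos hfpos
  exact tsr_quadratic_of_fixed_point hM.ne' (hM.trans hMN).ne' hη.ne' hmpos.ne' hmη.ne' h1 h2

/-- Underlying equation (34): any fixed point `(v, η)` of the TSR state evolution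
satisfies the quadratic equation `σ²·m(η)·η² − (m(η) + σ²)·η + M/N = 0`. -/
theorem tsr_fixed_point_quadratic (M N σ2 : ℝ) (hM : 0 < M) (hMN : M < N) (hσ2 : 0 < σ2)
    (m : ℝ → ℝ) (η v : ℝ) (hη : 0 < η) (hv : 0 ≤ v)
    (hmpos : 0 < m η) (hfpos : 0 < 1 / m η - η)
    (h1 : η = (((N - M) / M) * v + (N / M) * σ2)⁻¹)
    (h2 : v = (1 / m η - η)⁻¹) :
    σ2 * m η * η ^ 2 - (m η + σ2) * η + M / N = 0 :=
  tsr_fixed_point_quadratic_general M N σ2 hM hMN m η v hη hmpos hfpos h1 h2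
end

section
/- Explicit form of the TSR state-evolution fixed point: if η > 0 and v ≥ 0 satisfy η = (((N−M)/M)·v + (N/M)·σ²)⁻¹ and v = (1/m(η) − η)⁻¹, where m(η) > 0 and 1/m(η) − η > 0, then, writing m = m(η), the discriminant (m + σ²)² − 4·σ²·m·(M/N) is nonnegative and η = [(m + σ²) − √((m + σ²)² − 4·σ²·m·(M/N))] / (2·σ²·m). (Equation (34).) -/
/-!
Eliminating `v = ψ(η) = m / (1 - m η)` from `η⁻¹ = ((N - M)/M) v + (N/M) σ²` leaves the quadratic
`σ² m η² - (m + σ²) η + M/N = 0`, whose discriminant is the square `(m + σ² - 2 σ² m η)²`.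
Since `m η < 1` and `σ² η ≤ M/N < 1`, the number `m + σ² - 2 σ² m η = m (1 - σ² η) + σ² (1 - m η)`
is nonnegative, so `η` is the smaller root.
-/

noncomputable def tsrPhi (M N σ2 v : ℝ) : ℝ := (((N - M) / M) * v + (N / M) * σ2)⁻¹

noncomputable def tsrPsi (mmse η : ℝ) : ℝ := (1 / mmse - η)⁻¹

theorem eq_smaller_root_of_quadratic_eq_zero {a b c x : ℝ} (ha : a ≠ 0)
    (h : a * x ^ 2 - b * x + c = 0) (hx : 2 * a * x ≤ b) :
    0 ≤ b ^ 2 - 4 * a * c ∧ x = (b - √(b ^ 2 - 4 * a * c)) / (2 * a) := by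
  have hdisc : b ^ 2 - 4 * a * c = (b - 2 * a * x) ^ 2 := by linear_combination (-4 * a) * h
  refine ⟨hdisc ▸ sq_nonneg _, ?_⟩
  rw [hdisc, Real.sqrt_sq (sub_nonneg.2 hx)]
  field_simp
  ring

theorem two_mul_mul_le_add_of_mul_le_one {a b x : ℝ} (ha : 0 ≤ a) (hb : 0 ≤ b)
    (hax : a * x ≤ 1) (hbx : b * x ≤ 1) : 2 * (a * b) * x ≤ a + b := by
  nlinarith [mul_nonneg ha (sub_nonneg.2 hbx), mul_nonneg hb (sub_nonneg.2 hax)]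

theorem mul_le_div_of_eq_tsrPhi {M N σ2 v η : ℝ} (hM : 0 < M) (hMN : M ≤ N) (hv : 0 ≤ v)
    (hη : 0 < η) (h : η = tsrPhi M N σ2 v) : σ2 * η ≤ M / N := by
  have hN : 0 < N := hM.trans_le hMN
  have hinv : ((N - M) / M) * v + (N / M) * σ2 = η⁻¹ := by rw [h, tsrPhi, inv_inv]
  have hσ2 : (N / M) * σ2 ≤ η⁻¹ :=
    hinv ▸ le_add_of_nonneg_left (mul_nonneg (div_nonneg (sub_nonneg.2 hMN) hM.le) hv)
  rw [le_div_iff₀ hN]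
  rw [div_mul_eq_mul_div, div_le_iff₀ hM, le_inv_mul_iff₀ hη] at hσ2
  linarith

theorem tsrPhi_tsrPsi_quadratic {M N σ2 mmse v η : ℝ} (hM : M ≠ 0) (hN : N ≠ 0)
    (hmmse : mmse ≠ 0) (hη : η ≠ 0) (hψ : 1 / mmse - η ≠ 0)
    (h1 : η = tsrPhi M N σ2 v) (h2 : v = tsrPsi mmse η) :
    σ2 * mmse * η ^ 2 - (mmse + σ2) * η + M / N = 0 := by
  have hinv : ((N - M) / M) * v + (N / M) * σ2 = η⁻¹ := by rw [h1, tsrPhi, inv_inv]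
  have hv : v * (1 / mmse - η) = 1 := by rw [h2, tsrPsi, inv_mul_cancel₀ hψ]
  field_simp at hinv hv ⊢
  linear_combination (mmse * η - 1) * hinv + (N - M) * η * hv

/-- Equation (34), explicit form of the TSR state-evolution fixed point: writing
`m = m(η)`, the discriminant `(m + σ²)² − 4·σ²·m·(M/N)` is nonnegative and
`η = [(m + σ²) − √((m + σ²)² − 4·σ²·m·(M/N))] / (2·σ²·m)`. -/
theorem tsr_fixed_point_explicit (M N σ2 : ℝ) (hM : 0 < M) (hMN : M < N) (hσ2 : 0 < σ2)
    (m : ℝ → ℝ) (η v : ℝ) (hη : 0 < η) (hv : 0 ≤ v)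
    (hmpos : 0 < m η) (hfpos : 0 < 1 / m η - η)
    (h1 : η = (((N - M) / M) * v + (N / M) * σ2)⁻¹)
    (h2 : v = (1 / m η - η)⁻¹) :
    0 ≤ (m η + σ2) ^ 2 - 4 * σ2 * m η * (M / N) ∧
    η = ((m η + σ2) - Real.sqrt ((m η + σ2) ^ 2 - 4 * σ2 * m η * (M / N))) /
        (2 * σ2 * m η) := by
  have hquad := tsrPhi_tsrPsi_quadratic hM.ne' (hM.trans hMN).ne' hmpos.ne' hη.ne' hfpos.ne' h1 h2
  have hmη : m η * η ≤ 1 := by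
    rw [sub_pos, lt_div_iff₀ hmpos] at hfpos
    linarith
  have hσ2η : σ2 * η ≤ 1 :=
    (mul_le_div_of_eq_tsrPhi hM hMN.le hv hη h1).trans ((div_le_one (hM.trans hMN)).2 hMN.le)
  have hroot := two_mul_mul_le_add_of_mul_le_one hσ2.le hmpos.le hσ2η hmη
  simpa only [add_comm σ2, mul_assoc] using
    eq_smaller_root_of_quadratic_eq_zero (mul_pos hσ2 hmpos).ne' hquad (by linarith)
end

section
/- Proposition 2 (TSR-DFT outperforms AMP-IID): for every t ≥ 0, v_T^t ≤ v_A^t. -/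
/-!
Both recursions feed their current variance `v` into the same effective SNR
`η = (N/M · (v + σ²))⁻¹`, which decreases in `v`. Inductively `v_T ≤ v_A`, so the TSR-DFT
SNR dominates the AMP-IID one, and monotonicity of `η ↦ 1/mmse(η) - η` transfers this to the
denominator of the TSR-DFT update. What remains is `(N-M)/N ≤ 1 - η_A · mmse(η_A)`, which holds
because the AMP-IID variances decrease, so that `mmse(η_A^{t+1}) = v_A^{t+1} ≤ v_A^t` and
`v_A^t · η_A^{t+1} ≤ M/N`.
-/

open Set

/-- The SNR `η^{t+1}` of both recursions as a function of `v^t`, with `a = N/M`. -/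
noncomputable def snr (a σ2 v : ℝ) : ℝ := (a * v + a * σ2)⁻¹

section Snr

variable {a σ2 v w : ℝ}

lemma snr_pos (ha : 0 < a) (hσ2 : 0 < σ2) (hv : 0 ≤ v) : 0 < snr a σ2 v := by
  unfold snr; positivity

lemma snr_anti (ha : 0 < a) (hσ2 : 0 < σ2) (hv : 0 ≤ v) (hvw : v ≤ w) :
    snr a σ2 w ≤ snr a σ2 v := by
  unfold snr
  gcongr

lemma mul_snr_le_inv (ha : 0 < a) (hσ2 : 0 ≤ σ2) (hv : 0 < v) : v * snr a σ2 v ≤ a⁻¹ := by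
  unfold snr
  rw [← div_eq_mul_inv, div_le_iff₀ (by positivity), ← mul_add, inv_mul_cancel_left₀ ha.ne']
  linarith

end Snr

lemma one_le_one_div_sub {x η : ℝ} (hx : 0 < x) (h : x ≤ 1 / (1 + η)) : 1 ≤ 1 / x - η := by
  have := one_div_le_one_div_of_le hx h
  rw [one_div_one_div] at this
  linarith

lemma mul_inv_le_of_le_one_sub_mul {x η g c : ℝ} (hx : 0 < x) (hg : 0 < g)
    (hxg : 1 / x - η ≤ g) (hc : c ≤ 1 - x * η) : c * g⁻¹ ≤ x := by
  rw [← div_eq_mul_inv, div_le_iff₀ hg]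
  calc c ≤ 1 - x * η := hc
    _ = x * (1 / x - η) := by field_simp
    _ ≤ x * g := mul_le_mul_of_nonneg_left hxg hx.le

section StateEvolution

variable {m : ℝ → ℝ} {a σ2 c : ℝ} {vT vA : ℕ → ℝ}

lemma amp_pos (ha : 0 < a) (hσ2 : 0 < σ2) (hm : ∀ η > (0 : ℝ), 0 < m η ∧ m η ≤ 1 / (1 + η))
    (hvA0 : vA 0 = 1) (hvA : ∀ t, vA (t + 1) = m (snr a σ2 (vA t))) : ∀ t, 0 < vA t
  | 0 => by rw [hvA0]; exact one_pos
  | t + 1 => by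
    rw [hvA]
    exact (hm _ (snr_pos ha hσ2 (amp_pos ha hσ2 hm hvA0 hvA t).le)).1

lemma amp_antitone (ha : 0 < a) (hσ2 : 0 < σ2) (hmono : AntitoneOn m (Ioi 0))
    (hm : ∀ η > (0 : ℝ), 0 < m η ∧ m η ≤ 1 / (1 + η))
    (hvA0 : vA 0 = 1) (hvA : ∀ t, vA (t + 1) = m (snr a σ2 (vA t))) : Antitone vA := by
  have hpos := amp_pos ha hσ2 hm hvA0 hvA
  refine antitone_nat_of_succ_le fun t => ?_
  induction t with
  | zero =>
    have hη := snr_pos ha hσ2 (hpos 0).le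
    rw [hvA]
    refine (hm _ hη).2.trans ?_
    rw [hvA0] at hη ⊢
    exact div_le_one_of_le₀ (by linarith) (by linarith)
  | succ t ih =>
    calc vA (t + 2) = m (snr a σ2 (vA (t + 1))) := hvA _
      _ ≤ m (snr a σ2 (vA t)) :=
        hmono (snr_pos ha hσ2 (hpos t).le) (snr_pos ha hσ2 (hpos (t + 1)).le)
          (snr_anti ha hσ2 (hpos (t + 1)).le ih)
      _ = vA (t + 1) := (hvA t).symm

lemma tsr_nonneg_and_le_amp (ha : 0 < a) (hσ2 : 0 < σ2) (hc0 : 0 ≤ c) (hc : c ≤ 1 - a⁻¹)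
    (hmono : AntitoneOn m (Ioi 0)) (hm : ∀ η > (0 : ℝ), 0 < m η ∧ m η ≤ 1 / (1 + η))
    (hf : MonotoneOn (fun η => 1 / m η - η) (Ioi 0))
    (hvT0 : 0 ≤ vT 0) (hvT0_le_one : vT 0 ≤ 1)
    (hvT : ∀ t, vT (t + 1) = c * (1 / m (snr a σ2 (vT t)) - snr a σ2 (vT t))⁻¹)
    (hvA0 : vA 0 = 1) (hvA : ∀ t, vA (t + 1) = m (snr a σ2 (vA t))) :
    ∀ t, 0 ≤ vT t ∧ vT t ≤ vA t := by
  have hpos := amp_pos ha hσ2 hm hvA0 hvA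
  have hanti := amp_antitone ha hσ2 hmono hm hvA0 hvA
  intro t
  induction t with
  | zero => exact ⟨hvT0, hvA0 ▸ hvT0_le_one⟩
  | succ t ih =>
    obtain ⟨hT0, hTA⟩ := ih
    set ηA := snr a σ2 (vA t)
    set ηT := snr a σ2 (vT t)
    have hηA : 0 < ηA := snr_pos ha hσ2 (hpos t).le
    have hηAT : ηA ≤ ηT := snr_anti ha hσ2 hT0 hTA
    have hg : 1 / m ηA - ηA ≤ 1 / m ηT - ηT := hf hηA (hηA.trans_le hηAT) hηAT
    have hgA : 1 ≤ 1 / m ηA - ηA := one_le_one_div_sub (hm _ hηA).1 (hm _ hηA).2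
    have hgT : 0 < 1 / m ηT - ηT := by linarith
    have hmA : m ηA ≤ vA t := hvA t ▸ hanti t.le_succ
    have hmηA : m ηA * ηA ≤ a⁻¹ :=
      (mul_le_mul_of_nonneg_right hmA hηA.le).trans (mul_snr_le_inv ha hσ2.le (hpos t))
    rw [hvT, hvA]
    exact ⟨mul_nonneg hc0 (inv_nonneg.mpr hgT.le),
      mul_inv_le_of_le_one_sub_mul (hm _ hηA).1 hgT hg (by linarith)⟩

end StateEvolution

/-- Proposition 2 (TSR-DFT outperforms AMP-IID): for every `t ≥ 0`, `v_T^t ≤ v_A^t`. -/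
theorem tsr_dft_outperforms_amp_iid (M N σ2 : ℝ) (hM : 0 < M) (hMN : M < N) (hσ2 : 0 < σ2)
    (m : ℝ → ℝ)
    (hmono : ∀ η₁ η₂ : ℝ, 0 < η₁ → η₁ ≤ η₂ → m η₂ ≤ m η₁)
    (hm : ∀ η > (0 : ℝ), 0 < m η ∧ m η ≤ 1 / (1 + η))
    (hf : ∀ η₁ η₂ : ℝ, 0 < η₁ → η₁ ≤ η₂ → 1 / m η₁ - η₁ ≤ 1 / m η₂ - η₂)
    (vT ηT vA ηA : ℕ → ℝ)
    (hvT0 : vT 0 = (N - M) / N)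
    (hηT : ∀ t : ℕ, ηT (t + 1) = ((N / M) * vT t + (N / M) * σ2)⁻¹)
    (hvT : ∀ t : ℕ, vT (t + 1) = ((N - M) / N) * (1 / m (ηT (t + 1)) - ηT (t + 1))⁻¹)
    (hvA0 : vA 0 = 1)
    (hηA : ∀ t : ℕ, ηA (t + 1) = ((N / M) * vA t + (N / M) * σ2)⁻¹)
    (hvA : ∀ t : ℕ, vA (t + 1) = m (ηA (t + 1))) :
    ∀ t : ℕ, vT t ≤ vA t := by
  have hN : 0 < N := hM.trans hMN
  have hc : (N - M) / N = 1 - (N / M)⁻¹ := by field_simp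
  have hc0 : 0 ≤ (N - M) / N := div_nonneg (by linarith) hN.le
  have hvT0_le_one : vT 0 ≤ 1 := by rw [hvT0, div_le_one hN]; linarith
  intro t
  refine (tsr_nonneg_and_le_amp (div_pos hN hM) hσ2 hc0 hc.le
    (fun x hx y _ hxy => hmono x y hx hxy) hm (fun x hx y _ hxy => hf x y hx hxy)
    (hvT0 ▸ hc0) hvT0_le_one (fun t => ?_) hvA0 (fun t => ?_) t).2
  · rw [hvT, hηT]; rfl
  · rw [hvA, hηA]; rfl
end

section
/- For every t ≥ 0, the effective SNR of TSR-DFT dominates that of AMP-IID: η_T^{t+1} ≥ η_A^{t+1}. (Intermediate step in the proof of Corollary 1.) -/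
/-!
Both recursions feed the current variance `v` into the same effective SNR
`η = (δ v + δ σ²)⁻¹` with `δ = N/M`, which decreases in `v`, so it suffices to show `v_T^t ≤ v_A^t`.
The AMP variances decrease, so `η_A^{t+1} m(η_A^{t+1}) ≤ η_A^{t+1} v_A^t ≤ δ⁻¹`, i.e.
`m(η_A) (1/m(η_A) - η_A) ≥ 1 - δ⁻¹ = (N-M)/N`. Together with the monotonicity of `1/m(η) - η`
and `η_T ≥ η_A` (induction hypothesis), this gives
`v_T^{t+1} = (1 - δ⁻¹) (1/m(η_T) - η_T)⁻¹ ≤ (1 - δ⁻¹) (1/m(η_A) - η_A)⁻¹ ≤ m(η_A) = v_A^{t+1}`.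
-/

noncomputable def effSNR (δ σ2 v : ℝ) : ℝ := (δ * v + δ * σ2)⁻¹

section EffSNR

variable {δ σ2 v w : ℝ}

theorem effSNR_pos (hδ : 0 < δ) (hσ2 : 0 ≤ σ2) (hv : 0 < v) : 0 < effSNR δ σ2 v := by
  unfold effSNR
  positivity

theorem effSNR_anti (hδ : 0 < δ) (hσ2 : 0 ≤ σ2) (hv : 0 < v) (hvw : v ≤ w) :
    effSNR δ σ2 w ≤ effSNR δ σ2 v :=
  inv_anti₀ (by positivity) (by gcongr)

theorem effSNR_mul_le (hδ : 0 < δ) (hσ2 : 0 ≤ σ2) (hv : 0 < v) :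
    effSNR δ σ2 v * v ≤ δ⁻¹ := by
  unfold effSNR
  rw [inv_mul_le_iff₀ (by positivity), ← mul_add, mul_comm δ, mul_inv_cancel_right₀ hδ.ne']
  linarith

end EffSNR

section InvSub

variable {x η c : ℝ}

theorem inv_sub_pos_of_mul_le (hx : 0 < x) (hc : c < 1) (hηx : η * x ≤ c) : 0 < 1 / x - η := by
  rw [sub_pos, lt_div_iff₀ hx]
  linarith

theorem one_sub_mul_inv_inv_sub_le (hx : 0 < x) (hc : c < 1) (hηx : η * x ≤ c) :
    (1 - c) * (1 / x - η)⁻¹ ≤ x := by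
  have hx_mul : x * (1 / x - η) = 1 - η * x := by field_simp
  rw [mul_inv_le_iff₀ (inv_sub_pos_of_mul_le hx hc hηx), hx_mul]
  linarith

end InvSub

section StateEvolution

variable {δ σ2 : ℝ} {m : ℝ → ℝ}

theorem amp_variance_pos_antitone (hδ : 0 < δ) (hσ2 : 0 ≤ σ2)
    (hmono : ∀ η₁ η₂ : ℝ, 0 < η₁ → η₁ ≤ η₂ → m η₂ ≤ m η₁)
    (hm : ∀ η > (0 : ℝ), 0 < m η ∧ m η ≤ 1 / (1 + η))
    {v : ℕ → ℝ} (hv0 : v 0 = 1) (hv : ∀ t, v (t + 1) = m (effSNR δ σ2 (v t))) :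
    ∀ t, 0 < v t ∧ v (t + 1) ≤ v t := by
  intro t
  induction t with
  | zero =>
    have hη : 0 < effSNR δ σ2 1 := effSNR_pos hδ hσ2 one_pos
    refine ⟨hv0 ▸ one_pos, ?_⟩
    rw [hv, hv0]
    calc m (effSNR δ σ2 1) ≤ 1 / (1 + effSNR δ σ2 1) := (hm _ hη).2
      _ ≤ 1 := (div_le_one (by linarith)).2 (by linarith)
  | succ t ih =>
    obtain ⟨hpos, hle⟩ := ih
    have hη := effSNR_pos hδ hσ2 hpos
    have hpos' : 0 < v (t + 1) := hv t ▸ (hm _ hη).1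
    refine ⟨hpos', ?_⟩
    have hstep := hmono _ _ hη (effSNR_anti hδ hσ2 hpos' hle)
    rwa [← hv, ← hv] at hstep

theorem tsr_variance_le_amp (hδ : 1 < δ) (hσ2 : 0 ≤ σ2)
    (hmono : ∀ η₁ η₂ : ℝ, 0 < η₁ → η₁ ≤ η₂ → m η₂ ≤ m η₁)
    (hm : ∀ η > (0 : ℝ), 0 < m η ∧ m η ≤ 1 / (1 + η))
    (hf : ∀ η₁ η₂ : ℝ, 0 < η₁ → η₁ ≤ η₂ → 1 / m η₁ - η₁ ≤ 1 / m η₂ - η₂)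
    {u v : ℕ → ℝ} (hu0 : u 0 = 1 - δ⁻¹)
    (hu : ∀ t, u (t + 1) =
      (1 - δ⁻¹) * (1 / m (effSNR δ σ2 (u t)) - effSNR δ σ2 (u t))⁻¹)
    (hv0 : v 0 = 1) (hv : ∀ t, v (t + 1) = m (effSNR δ σ2 (v t))) :
    ∀ t, 0 < u t ∧ u t ≤ v t := by
  have hδ0 : 0 < δ := one_pos.trans hδ
  have hδinv : δ⁻¹ < 1 := inv_lt_one_of_one_lt₀ hδ
  have hA := amp_variance_pos_antitone hδ0 hσ2 hmono hm hv0 hv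
  intro t
  induction t with
  | zero =>
    rw [hu0, hv0]
    exact ⟨sub_pos.2 hδinv, by linarith [inv_pos.2 hδ0]⟩
  | succ t ih =>
    obtain ⟨huA, huvA⟩ := ih
    obtain ⟨hvA, hvvA⟩ := hA t
    set ηA := effSNR δ σ2 (v t)
    set ηT := effSNR δ σ2 (u t)
    have hηA : 0 < ηA := effSNR_pos hδ0 hσ2 hvA
    have hηAT : ηA ≤ ηT := effSNR_anti hδ0 hσ2 huA huvA
    have hmA : 0 < m ηA := (hm _ hηA).1
    have hηm : ηA * m ηA ≤ δ⁻¹ := calc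
      ηA * m ηA ≤ ηA * v t := by gcongr; exact hv t ▸ hvvA
      _ ≤ δ⁻¹ := effSNR_mul_le hδ0 hσ2 hvA
    have hgA := inv_sub_pos_of_mul_le hmA hδinv hηm
    have hgAT := hf _ _ hηA hηAT
    have hgT := hgA.trans_le hgAT
    have hc := sub_pos.2 hδinv
    rw [hu, hv]
    refine ⟨by positivity, ?_⟩
    calc (1 - δ⁻¹) * (1 / m ηT - ηT)⁻¹ ≤ (1 - δ⁻¹) * (1 / m ηA - ηA)⁻¹ :=
          mul_le_mul_of_nonneg_left (inv_anti₀ hgA hgAT) hc.le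
      _ ≤ m ηA := one_sub_mul_inv_inv_sub_le hmA hδinv hηm

end StateEvolution

/-- Intermediate step in the proof of Corollary 1: for every `t ≥ 0`, the effective SNR
of TSR-DFT dominates that of AMP-IID: `η_T^{t+1} ≥ η_A^{t+1}`. -/
theorem tsr_snr_dominates (M N σ2 : ℝ) (hM : 0 < M) (hMN : M < N) (hσ2 : 0 < σ2)
    (m : ℝ → ℝ)
    (hmono : ∀ η₁ η₂ : ℝ, 0 < η₁ → η₁ ≤ η₂ → m η₂ ≤ m η₁)
    (hm : ∀ η > (0 : ℝ), 0 < m η ∧ m η ≤ 1 / (1 + η))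
    (hf : ∀ η₁ η₂ : ℝ, 0 < η₁ → η₁ ≤ η₂ → 1 / m η₁ - η₁ ≤ 1 / m η₂ - η₂)
    (vT ηT vA ηA : ℕ → ℝ)
    (hvT0 : vT 0 = (N - M) / N)
    (hηT : ∀ t : ℕ, ηT (t + 1) = ((N / M) * vT t + (N / M) * σ2)⁻¹)
    (hvT : ∀ t : ℕ, vT (t + 1) = ((N - M) / N) * (1 / m (ηT (t + 1)) - ηT (t + 1))⁻¹)
    (hvA0 : vA 0 = 1)
    (hηA : ∀ t : ℕ, ηA (t + 1) = ((N / M) * vA t + (N / M) * σ2)⁻¹)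
    (hvA : ∀ t : ℕ, vA (t + 1) = m (ηA (t + 1))) :
    ∀ t : ℕ, ηA (t + 1) ≤ ηT (t + 1) := by
  have hδ : 1 < N / M := (one_lt_div hM).2 hMN
  have hc : (N - M) / N = 1 - (N / M)⁻¹ := by
    have : N ≠ 0 := (hM.trans hMN).ne'
    field_simp
  have hvTA := tsr_variance_le_amp hδ hσ2.le hmono hm hf (hvT0.trans hc)
    (fun t => by rw [hvT, hηT, hc]; rfl) hvA0 (fun t => by rw [hvA, hηA]; rfl)
  intro t
  rw [hηA, hηT]
  exact effSNR_anti (one_pos.trans hδ) hσ2.le (hvTA t).1 (hvTA t).2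
end

section
/- Key induction step of Proposition 2 (equations (35)–(39)): let v, v' be real numbers with 0 < v' ≤ v, set η = ((N/M)·v + (N/M)·σ²)⁻¹, and suppose ((N−M)/(N·v') + η)⁻¹ = m(η), where m(η) > 0. Then v' + σ²·v' / ((N/M)·v' + ((N−M)/M)·σ²) ≤ m(η), and consequently v' ≤ m(η). -/
/-! The left-hand bound equals `((N - M) / (N v') + η')⁻¹`, where `η' = ((N/M) v' + (N/M) σ²)⁻¹`
is the SNR the recursion would assign to `v'`. Since `v' ≤ v` gives `η ≤ η'`, and
`x ↦ ((N - M) / (N v') + x)⁻¹` is antitone, this is at most `((N - M) / (N v') + η)⁻¹ = m η`. -/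

theorem add_mul_div_eq_inv_div_add_inv {M N σ2 v : ℝ} (hM : M ≠ 0) (hN : N ≠ 0) (hv : v ≠ 0)
    (hvσ : v + σ2 ≠ 0) (hD : N * v + (N - M) * σ2 ≠ 0) :
    v + σ2 * v / ((N / M) * v + ((N - M) / M) * σ2)
      = ((N - M) / (N * v) + ((N / M) * v + (N / M) * σ2)⁻¹)⁻¹ := by
  have hden : (N / M) * v + ((N - M) / M) * σ2 = (N * v + (N - M) * σ2) / M := by
    field_simp
  have hsum : (N - M) / (N * v) + ((N / M) * v + (N / M) * σ2)⁻¹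
      = (N * v + (N - M) * σ2) / (N * v * (v + σ2)) := by
    field_simp
    ring
  rw [hden, hsum, inv_div, eq_div_iff hD, div_div_eq_mul_div, add_mul, div_mul_cancel₀ _ hD]
  ring

theorem tsr_induction_step_general (M N σ2 : ℝ) (hM : 0 < M) (hMN : M < N) (hσ2 : 0 < σ2)
    (m : ℝ → ℝ) (v v' η : ℝ) (hv' : 0 < v') (hv'v : v' ≤ v)
    (hη : η = ((N / M) * v + (N / M) * σ2)⁻¹)
    (hrec : ((N - M) / (N * v') + η)⁻¹ = m η) :
    v' + σ2 * v' / ((N / M) * v' + ((N - M) / M) * σ2) ≤ m η ∧ v' ≤ m η := by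
  have hN : 0 < N := hM.trans hMN
  have hNM : 0 < N - M := sub_pos.mpr hMN
  have hv : 0 < v := hv'.trans_le hv'v
  have hηpos : 0 < η := by rw [hη]; positivity
  have hbound : v' + σ2 * v' / ((N / M) * v' + ((N - M) / M) * σ2) ≤ m η := by
    rw [← hrec, add_mul_div_eq_inv_div_add_inv hM.ne' hN.ne' hv'.ne' (by positivity)
      (add_pos (mul_pos hN hv') (mul_pos hNM hσ2)).ne']
    gcongr ((N - M) / (N * v') + ?_)⁻¹
    rw [hη]
    gcongr
  have hgap : 0 ≤ σ2 * v' / ((N / M) * v' + ((N - M) / M) * σ2) := by positivity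
  exact ⟨hbound, by linarith⟩

/-- Key induction step of Proposition 2 (equations (35)–(39)): if `0 < v' ≤ v`,
`η = ((N/M)·v + (N/M)·σ²)⁻¹` and `((N−M)/(N·v') + η)⁻¹ = m(η)` with `m(η) > 0`, then
`v' + σ²·v' / ((N/M)·v' + ((N−M)/M)·σ²) ≤ m(η)`, and consequently `v' ≤ m(η)`. -/
theorem tsr_induction_step (M N σ2 : ℝ) (hM : 0 < M) (hMN : M < N) (hσ2 : 0 < σ2)
    (m : ℝ → ℝ) (v v' η : ℝ) (hv' : 0 < v') (hv'v : v' ≤ v)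
    (hη : η = ((N / M) * v + (N / M) * σ2)⁻¹)
    (hrec : ((N - M) / (N * v') + η)⁻¹ = m η) (hmpos : 0 < m η) :
    v' + σ2 * v' / ((N / M) * v' + ((N - M) / M) * σ2) ≤ m η ∧ v' ≤ m η :=
  tsr_induction_step_general M N σ2 hM hMN hσ2 m v v' η hv' hv'v hη hrec
end
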